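/- The only translation contained in the group H = {f_{s,t} : s,t ∈ ℝ} of affine maps f_{s,t}(x,y) = (x + sy + s²/2 + t, y + s) are the maps f_{0,t}, i.e., the horizontal translations (x,y) ↦ (x+t, y). Consequently, if h is irrational, the subgroup generated by f_{h,0} and f_{1,1} contains no nontrivial translation. -/
import Mathlib


/-- The affine bijection `f_{s,t}(x,y) = (x + s*y + s^2/2 + t, y + s)` of `ℝ²`,
as a permutation of `ℝ × ℝ`. -/
noncomputable def Fst (s t : ℝ) : Equiv.Perm (ℝ × ℝ) where
  toFun p := (p.1 + s * p.2 + s ^ 2 / 2 + t, p.2 + s)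
  invFun p := (p.1 + (-s) * p.2 + (-s) ^ 2 / 2 + (-t), p.2 + (-s))
  left_inv p := by
    refine Prod.ext ?_ ?_ <;> simp only [] <;> ring
  right_inv p := by
    refine Prod.ext ?_ ?_ <;> simp only [] <;> ring

lemma Fst_apply (s t : ℝ) (p : ℝ × ℝ) :
    Fst s t p = (p.1 + s * p.2 + s ^ 2 / 2 + t, p.2 + s) := rfl

lemma Fst_mul (s t s' t' : ℝ) : Fst s t * Fst s' t' = Fst (s + s') (t + t') := by
  ext p <;> simp [Fst_apply, Equiv.Perm.mul_apply] <;> ring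

lemma Fst_one : Fst 0 0 = 1 := by
  ext p <;> simp [Fst_apply]

lemma Fst_inv (s t : ℝ) : (Fst s t)⁻¹ = Fst (-s) (-t) := by
  rw [inv_eq_iff_mul_eq_one, Fst_mul]
  simpa using Fst_one

/-- The only translations in the group `H = {f_{s,t}}` are the maps `f_{0,t}`,
i.e. the horizontal translations `(x,y) ↦ (x+t, y)`.  Consequently, for `h`
irrational, the subgroup generated by `f_{h,0}` and `f_{1,1}` contains no
nontrivial translation. -/
theorem fst_translations :
    (∀ s t : ℝ, (∃ v : ℝ × ℝ, ∀ p : ℝ × ℝ, Fst s t p = p + v) ↔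
      (s = 0 ∧ ∀ p : ℝ × ℝ, Fst s t p = (p.1 + t, p.2))) ∧
    (∀ h : ℝ, Irrational h →
      ∀ g ∈ Subgroup.closure {Fst h 0, Fst 1 1},
        (∃ v : ℝ × ℝ, ∀ p : ℝ × ℝ, g p = p + v) → g = 1) := by
  have main : ∀ s t : ℝ, (∃ v : ℝ × ℝ, ∀ p : ℝ × ℝ, Fst s t p = p + v) ↔
      (s = 0 ∧ ∀ p : ℝ × ℝ, Fst s t p = (p.1 + t, p.2)) := by
    intro s t
    constructor
    · rintro ⟨v, hv⟩
      have h0 := hv (0, 0)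
      have h1 := hv (0, 1)
      simp [Fst_apply, Prod.ext_iff] at h0 h1
      have hs : s = 0 := by
        have := h1.1
        rw [← h0.1] at this
        linarith
      subst hs
      refine ⟨rfl, fun p => ?_⟩
      simp [Fst_apply]
    · rintro ⟨hs, hf⟩
      subst hs
      exact ⟨(t, 0), fun p => by simp [Fst_apply, Prod.ext_iff]⟩
  refine ⟨main, ?_⟩
  intro h hh g hg htr
  have hform : ∃ m n : ℤ, g = Fst (m * h + n) n := by
    refine Subgroup.closure_induction ?_ ?_ ?_ ?_ hg
    · rintro x (rfl | rfl)
      · exact ⟨1, 0, by norm_num⟩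
      · exact ⟨0, 1, by norm_num⟩
    · exact ⟨0, 0, by simpa using Fst_one.symm⟩
    · rintro x y _ _ ⟨m, n, rfl⟩ ⟨m', n', rfl⟩
      exact ⟨m + m', n + n', by rw [Fst_mul]; push_cast; ring_nf⟩
    · rintro x _ ⟨m, n, rfl⟩
      exact ⟨-m, -n, by rw [Fst_inv]; push_cast; ring_nf⟩
  obtain ⟨m, n, rfl⟩ := hform
  have hs0 : (m : ℝ) * h + n = 0 := ((main _ _).mp htr).1
  have hm : m = 0 := by
    by_contra hm
    apply hh
    refine ⟨(-n : ℚ) / m, ?_⟩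
    push_cast
    have hm' : (m : ℝ) ≠ 0 := Int.cast_ne_zero.mpr hm
    field_simp
    linarith
  subst hm
  have hn : (n : ℝ) = 0 := by simpa using hs0
  have : n = 0 := by exact_mod_cast hn
  subst this
  simpa using Fst_one
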